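/- Let F : ℝⁿ × ℝᵐ → ℝⁿ be continuous, and let X : ℝ → ℝⁿ and E : ℝ → ℝᵐ be continuous functions such that X is differentiable with X'(t) = F(X(t), E(t)) for all t, X converges to X* and E converges to E* as t → ∞. Then F(X*, E*) = 0. -/

import Mathlib

/-! If `X → X*` and `X' = F(X, E) → F(X*, E*) =: L`, the mean value inequality applied to
`X t - t • L` on `[t, t + 1]` shows that the increments `X (t + 1) - X t` tend to `L`; since they
also tend to `X* - X* = 0`, we get `L = 0`. -/

open Filter Topology Set

section

variable {E : Type*} [NormedAddCommGroup E] [NormedSpace ℝ E]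

theorem tendsto_sub_add_one_of_tendsto_deriv {f f' : ℝ → E} {L : E}
    (hf : ∀ᶠ t in atTop, HasDerivAt f (f' t) t) (hf' : Tendsto f' atTop (𝓝 L)) :
    Tendsto (fun t => f (t + 1) - f t) atTop (𝓝 L) := by
  rw [Metric.tendsto_atTop]
  intro ε hε
  obtain ⟨T, hT⟩ := eventually_atTop.mp
    (hf.and (hf'.eventually (Metric.closedBall_mem_nhds L (half_pos hε))))
  refine ⟨T, fun t ht => ?_⟩
  have hderiv : ∀ s ∈ Icc t (t + 1),
      HasDerivWithinAt (fun s => f s - s • L) (f' s - L) (Icc t (t + 1)) s := fun s hs => by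
    have h := (hT s (ht.trans hs.1)).1.sub ((hasDerivAt_id' s).smul_const L)
    rw [one_smul] at h
    exact h.hasDerivWithinAt
  have hbound : ∀ s ∈ Ico t (t + 1), ‖f' s - L‖ ≤ ε / 2 := fun s hs => by
    simpa only [Metric.mem_closedBall, dist_eq_norm] using (hT s (ht.trans hs.1)).2
  have hmvt := norm_image_sub_le_of_norm_deriv_le_segment' hderiv hbound (t + 1)
    (right_mem_Icc.mpr (by linarith))
  calc dist (f (t + 1) - f t) L
      = ‖(f (t + 1) - (t + 1) • L) - (f t - t • L)‖ := by
        rw [dist_eq_norm, add_smul, one_smul]; congr 1; abel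
    _ ≤ ε / 2 * (t + 1 - t) := hmvt
    _ < ε := by linarith

theorem eq_zero_of_tendsto_of_tendsto_deriv {f f' : ℝ → E} {a L : E}
    (hf : ∀ᶠ t in atTop, HasDerivAt f (f' t) t) (hfa : Tendsto f atTop (𝓝 a))
    (hf' : Tendsto f' atTop (𝓝 L)) : L = 0 := by
  have hshift : Tendsto (fun t => f (t + 1) - f t) atTop (𝓝 0) := by
    simpa only [Function.comp_def, id, sub_self] using
      (hfa.comp (tendsto_atTop_add_const_right _ 1 tendsto_id)).sub hfa
  exact tendsto_nhds_unique (tendsto_sub_add_one_of_tendsto_deriv hf hf') hshift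

end

theorem equilibrium_is_zero_of_F_general (n m : ℕ)
    (F : EuclideanSpace ℝ (Fin n) × EuclideanSpace ℝ (Fin m) → EuclideanSpace ℝ (Fin n))
    (hF : Continuous F)
    (X : ℝ → EuclideanSpace ℝ (Fin n)) (E : ℝ → EuclideanSpace ℝ (Fin m))
    (hXdiff : Differentiable ℝ X)
    (hode : ∀ t : ℝ, deriv X t = F (X t, E t))
    (Xstar : EuclideanSpace ℝ (Fin n)) (Estar : EuclideanSpace ℝ (Fin m))
    (hXconv : Tendsto X atTop (nhds Xstar))
    (hEconv : Tendsto E atTop (nhds Estar)) :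
    F (Xstar, Estar) = 0 := by
  have hderiv : Tendsto (deriv X) atTop (𝓝 (F (Xstar, Estar))) := by
    simpa only [funext hode, Function.comp_def] using (hF.tendsto _).comp (hXconv.prodMk_nhds hEconv)
  exact eq_zero_of_tendsto_of_tendsto_deriv
    (Eventually.of_forall fun t => (hXdiff t).hasDerivAt) hXconv hderiv

theorem equilibrium_is_zero_of_F (n m : ℕ)
    (F : EuclideanSpace ℝ (Fin n) × EuclideanSpace ℝ (Fin m) → EuclideanSpace ℝ (Fin n))
    (hF : Continuous F)
    (X : ℝ → EuclideanSpace ℝ (Fin n)) (E : ℝ → EuclideanSpace ℝ (Fin m))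
    (hXdiff : Differentiable ℝ X) (hE : Continuous E)
    (hode : ∀ t : ℝ, deriv X t = F (X t, E t))
    (Xstar : EuclideanSpace ℝ (Fin n)) (Estar : EuclideanSpace ℝ (Fin m))
    (hXconv : Tendsto X atTop (nhds Xstar))
    (hEconv : Tendsto E atTop (nhds Estar)) :
    F (Xstar, Estar) = 0 :=
  equilibrium_is_zero_of_F_general n m F hF X E hXdiff hode Xstar Estar hXconv hEconv
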